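/- arXiv:2101.11175 — 2 statements merged into one kernel-verified Lean document; each statement's English description precedes it below -/
import Mathlib

section
/- Let p be a prime and let k be a natural number with k ≥ p; set j = p and n = k + p. Assume p divides exactly one of the 2p−1 consecutive integers n, n−1, …, n−2p+2 (so necessarily p divides k+1 and the unique index i with p ∣ n − i equals p − 1), and assume p² does not divide k + 1. Then for every natural number m ≤ p: p − m is p-dominated by n − 2m if and only if m = 0 or p ≤ 2m. -/
/-!
The hypothesis on the `2p - 1` consecutive integers forces `n ≡ -1 (mod p)`, so
`n = p q + (p - 1)` with `k + 1 = p q`, and `p ∤ q` because `p² ∤ k + 1`. For `0 < m < p`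
the number `p - m` is a single base-`p` digit, which is at most the last digit of `n - 2m`
exactly when subtracting `2m` from the last digit `p - 1` of `n` borrows, i.e. when
`p ≤ 2m`. For `m = 0` the digits of `p` are `0, 1`, and the second digit of `n` is
`q mod p ≠ 0`.
-/

/-- `a` is `p`-dominated by `b`: every digit of the base-`p` expansion of `a` is at
most the corresponding digit of the base-`p` expansion of `b`. -/
def pDom (p a b : ℕ) : Prop :=
  ∀ t, (Nat.digits p a).getD t 0 ≤ (Nat.digits p b).getD t 0

theorem pDom_iff_forall_mod {p : ℕ} (hp : 2 ≤ p) (a b : ℕ) :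
    pDom p a b ↔ ∀ t, a / p ^ t % p ≤ b / p ^ t % p := by
  simp only [pDom, Nat.getD_digits _ _ hp]

theorem pDom_zero_left (p b : ℕ) : pDom p 0 b := by
  simp [pDom]

theorem pDom_iff_le_mod_of_lt {p a : ℕ} (b : ℕ) (ha : a < p) :
    pDom p a b ↔ a ≤ b % p := by
  rcases le_or_gt 2 p with hp | hp
  · rw [pDom_iff_forall_mod hp]
    refine ⟨fun h => by simpa [Nat.mod_eq_of_lt ha] using h 0, fun h t => ?_⟩
    rcases t with _ | t
    · simpa [Nat.mod_eq_of_lt ha] using h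
    · rw [Nat.div_eq_of_lt (ha.trans_le (Nat.le_self_pow t.succ_ne_zero p))]
      simp
  · obtain rfl : a = 0 := by omega
    simp [pDom_zero_left]

theorem pDom_self_iff {p : ℕ} (hp : 2 ≤ p) (b : ℕ) : pDom p p b ↔ b / p % p ≠ 0 := by
  rw [pDom_iff_forall_mod hp]
  refine ⟨fun h => by simpa [Nat.div_self (by omega : 0 < p), Nat.mod_eq_of_lt hp,
    Nat.one_le_iff_ne_zero] using h 1, fun h t => ?_⟩
  match t with
  | 0 => simp
  | 1 => simpa [Nat.div_self (by omega : 0 < p), Nat.mod_eq_of_lt hp, Nat.one_le_iff_ne_zero]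
  | t + 2 =>
    rw [Nat.div_eq_of_lt (by simpa using Nat.pow_lt_pow_right hp (by omega : 1 < t + 2))]
    simp

theorem mod_eq_sub_one_of_existsUnique_dvd_sub {p n : ℕ} (hp : 0 < p)
    (h : ∃! t, t ≤ 2 * p - 2 ∧ p ∣ n - t) : n % p = p - 1 := by
  obtain ⟨_, _, huniq⟩ := h
  by_contra hne
  -- otherwise both `n % p` and `n % p + p` are admissible indices
  have hlt : n % p < p := Nat.mod_lt n hp
  have hdvd : p ∣ n - n % p := Nat.dvd_sub_mod n
  have hdvd' : p ∣ n - (n % p + p) := by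
    rw [Nat.sub_add_eq]
    exact Nat.dvd_sub hdvd dvd_rfl
  have := huniq _ ⟨by omega, hdvd⟩
  have := huniq _ ⟨by omega, hdvd'⟩
  omega

theorem sub_le_mod_sub_two_mul_iff {p n m : ℕ} (hn : n % p = p - 1) (hpn : p ≤ n)
    (hm : m < p) : p - m ≤ (n - 2 * m) % p ↔ p ≤ 2 * m := by
  obtain ⟨q, hq⟩ : ∃ q, n / p = q + 1 :=
    ⟨n / p - 1, by have := (Nat.one_le_div_iff (by omega)).mpr hpn; omega⟩
  have hnq : n = p * q + (2 * p - 1) := by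
    have := Nat.div_add_mod n p
    rw [hq, mul_add_one] at this
    omega
  rcases lt_or_ge (2 * m) p with hlt | hge
  · have : n - 2 * m = p * (q + 1) + (p - 1 - 2 * m) := by rw [hnq, mul_add_one]; omega
    rw [this, Nat.mul_add_mod, Nat.mod_eq_of_lt (by omega)]
    omega
  · have : n - 2 * m = p * q + (2 * p - 1 - 2 * m) := by omega
    rw [this, Nat.mul_add_mod, Nat.mod_eq_of_lt (by omega)]
    omega

theorem stmt6_general (p k : ℕ) (hp : p.Prime)
    (n : ℕ) (hn : n = k + p)
    (hone : ∃! t, t ≤ 2 * p - 2 ∧ p ∣ n - t)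
    (hnsq : ¬ p ^ 2 ∣ k + 1) :
    ∀ m : ℕ, m ≤ p → (pDom p (p - m) (n - 2 * m) ↔ (m = 0 ∨ p ≤ 2 * m)) := by
  intro m hm
  have hp2 := hp.two_le
  have hmod : n % p = p - 1 := mod_eq_sub_one_of_existsUnique_dvd_sub hp.pos hone
  have hk : k + 1 = p * (n / p) := by
    have := Nat.div_add_mod n p
    omega
  rcases Nat.eq_zero_or_pos m with rfl | hm0
  · have hq : ¬ p ∣ n / p := fun ⟨c, hc⟩ => hnsq ⟨c, by rw [hk, hc]; ring⟩
    simpa [pDom_self_iff hp2, ← Nat.dvd_iff_mod_eq_zero] using hq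
  rcases hm.eq_or_lt with rfl | hlt
  · simpa [pDom_zero_left] using Or.inr (by omega)
  rw [pDom_iff_le_mod_of_lt _ (by omega : p - m < p),
    sub_le_mod_sub_two_mul_iff hmod (by omega) hlt]
  omega

/-- Let `p` be prime, `k ≥ p`, `n = k + p`. Assume `p` divides exactly one of the
integers `n, n-1, …, n-2p+2`, and that `p²` does not divide `k + 1`. Then for every
`m ≤ p`: `p − m` is `p`-dominated by `n − 2m` if and only if `m = 0` or `p ≤ 2m`. -/
theorem stmt6 (p k : ℕ) (hp : p.Prime) (hkp : p ≤ k)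
    (n : ℕ) (hn : n = k + p)
    (hone : ∃! t, t ≤ 2 * p - 2 ∧ p ∣ n - t)
    (hnsq : ¬ p ^ 2 ∣ k + 1) :
    ∀ m : ℕ, m ≤ p → (pDom p (p - m) (n - 2 * m) ↔ (m = 0 ∨ p ≤ 2 * m)) :=
  stmt6_general p k hp n hn hone hnsq
end

section
/- Let p be a prime and let j, k be natural numbers with k ≥ j ≥ 2; set n = k + j. Assume p divides exactly one of the 2j−1 consecutive integers n, n−1, …, n−2j+2, and let i be the unique index with 0 ≤ i ≤ 2j−2 and p ∣ n − i. Assume further that either j < p, or j = p and p² divides k + 1. Then the number of natural numbers m with m ≤ j such that j − m is p-dominated by n − 2m equals (i − j + 1 if i ≥ j, and 0 otherwise) + (j − ⌊i/2⌋). -/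
lemma pDom_iff_le_mod {p a : ℕ} (hp : 2 ≤ p) (ha : a < p) (b : ℕ) :
    pDom p a b ↔ a ≤ b % p := by
  simp only [pDom, Nat.getD_digits _ _ hp]
  refine ⟨fun h => by simpa [Nat.mod_eq_of_lt ha] using h 0, fun h t => ?_⟩
  cases t with
  | zero => simpa [Nat.mod_eq_of_lt ha] using h
  | succ t => simp [Nat.div_eq_of_lt (ha.trans_le (Nat.le_self_pow t.succ_ne_zero p))]

lemma not_pDom_self_add_of_sq_dvd {p k : ℕ} (hp : 2 ≤ p) (hk : p ^ 2 ∣ k + 1) :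
    ¬ pDom p p (k + p) := by
  obtain ⟨t, ht⟩ := hk
  have hmod : (k + p) % (p * p) = p - 1 := by
    rw [show k + p = p - 1 + p * p * t by rw [← sq, ← ht]; omega, Nat.add_mul_mod_self_left,
      Nat.mod_eq_of_lt ((Nat.sub_lt (by omega) one_pos).trans_le (Nat.le_mul_self p))]
  intro h
  have h1 := h 1
  rw [Nat.getD_digits _ _ hp, Nat.getD_digits _ _ hp, pow_one, Nat.div_self (by omega),
    ← Nat.mod_mul_right_div_self, hmod, Nat.div_eq_of_lt (by omega), Nat.mod_eq_of_lt hp] at h1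
  omega

lemma lt_and_lt_add_of_unique_dvd_sub {p n i w : ℕ} (hp : 0 < p) (hin : i ≤ n) (hiw : i ≤ w)
    (hdvd : p ∣ n - i) (huniq : ∀ t, t ≤ w → p ∣ n - t → t = i) : i < p ∧ w < i + p := by
  constructor
  · by_contra! hpi
    have hdvd' : p ∣ n - (i - p) := by
      rw [show n - (i - p) = n - i + p by omega]
      exact dvd_add hdvd dvd_rfl
    have := huniq (i - p) (by omega) hdvd'
    omega
  · by_contra! hw
    have hdvd' : p ∣ n - (i + p) := by
      rw [← Nat.sub_sub]
      exact Nat.dvd_sub hdvd dvd_rfl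
    have := huniq (i + p) hw hdvd'
    omega

lemma Nat.ModEq.sub_mod_eq {p n i c : ℕ} (h : i ≡ n [MOD p]) (hcn : c ≤ n) (hc : c ≤ p + i) :
    (n - c) % p = (p + i - c) % p := by
  refine Nat.ModEq.add_right_cancel' c ?_
  rw [Nat.sub_add_cancel hcn, Nat.sub_add_cancel hc]
  exact h.symm.trans Nat.add_modEq_left.symm

lemma pDom_sub_sub_two_mul_iff {p j n i m : ℕ} (hp : 2 ≤ p) (hip : i < p) (hij : i < 2 * j)
    (hwin : 2 * j ≤ i + p + 1) (hmod : i ≡ n [MOD p]) (hjn : 2 * j ≤ n) (hmj : m ≤ j)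
    (hjm : j - m < p) :
    pDom p (j - m) (n - 2 * m) ↔ i < 2 * m ∨ m + j ≤ i := by
  rw [pDom_iff_le_mod hp hjm]
  rcases hmj.eq_or_lt with rfl | hmj
  · simp only [Nat.sub_self, zero_le, true_iff]
    omega
  rw [hmod.sub_mod_eq (by omega) (by omega)]
  by_cases h : 2 * m ≤ i
  · rw [show p + i - 2 * m = i - 2 * m + p by omega, Nat.add_mod_right,
      Nat.mod_eq_of_lt (by omega)]
    omega
  · rw [Nat.mod_eq_of_lt (by omega)]
    omega

lemma card_filter_lt_two_mul_or_add_le {i j : ℕ} (hij : i ≤ 2 * j) :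
    ((Finset.range (j + 1)).filter (fun m => i < 2 * m ∨ m + j ≤ i)).card =
      (if j ≤ i then i - j + 1 else 0) + (j - i / 2) := by
  have hsplit : (Finset.range (j + 1)).filter (fun m => i < 2 * m ∨ m + j ≤ i) =
      Finset.range (i + 1 - j) ∪ Finset.Ico (i / 2 + 1) (j + 1) := by
    ext m
    simp only [Finset.mem_filter, Finset.mem_range, Finset.mem_union, Finset.mem_Ico]
    omega
  have hdisj : Disjoint (Finset.range (i + 1 - j)) (Finset.Ico (i / 2 + 1) (j + 1)) := by
    simp only [Finset.disjoint_left, Finset.mem_range, Finset.mem_Ico]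
    omega
  rw [hsplit, Finset.card_union_of_disjoint hdisj, Finset.card_range, Nat.card_Ico]
  split_ifs <;> omega

open Classical in
/-- If `p` is prime, `k ≥ j ≥ 2`, `n = k + j`, `p` divides exactly one of the
integers `n, n-1, …, n-2j+2` (namely `n - i` with `0 ≤ i ≤ 2j-2`), and either
`j < p`, or `j = p` and `p² ∣ k + 1`, then the number of `m ≤ j` with `j − m`
`p`-dominated by `n − 2m` equals `(i − j + 1 if i ≥ j, else 0) + (j − ⌊i/2⌋)`. -/
theorem stmt11 (p j k : ℕ) (hp : p.Prime) (hj : 2 ≤ j) (hkj : j ≤ k)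
    (n : ℕ) (hn : n = k + j) (i : ℕ) (hi : i ≤ 2 * j - 2) (hdvd : p ∣ n - i)
    (huniq : ∀ t, t ≤ 2 * j - 2 → p ∣ n - t → t = i)
    (hcase : j < p ∨ (j = p ∧ p ^ 2 ∣ k + 1)) :
    ((Finset.range (j + 1)).filter (fun m => pDom p (j - m) (n - 2 * m))).card =
      (if j ≤ i then i - j + 1 else 0) + (j - i / 2) := by
  have hp2 := hp.two_le
  obtain ⟨hip, hwin⟩ := lt_and_lt_add_of_unique_dvd_sub hp.pos (by omega) hi hdvd huniq
  have hmod : i ≡ n [MOD p] := (Nat.modEq_iff_dvd' (by omega)).mpr hdvd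
  rw [← card_filter_lt_two_mul_or_add_le (by omega)]
  congr 1
  refine Finset.filter_congr fun m hm => ?_
  rw [Finset.mem_range] at hm
  by_cases hjm : j - m < p
  · exact pDom_sub_sub_two_mul_iff hp2 hip (by omega) (by omega) hmod (by omega) (by omega) hjm
  · obtain ⟨rfl, hjp, hsq⟩ : m = 0 ∧ j = p ∧ p ^ 2 ∣ k + 1 := by omega
    subst hn hjp
    simpa [hip.not_ge] using not_pDom_self_add_of_sq_dvd hp2 hsq
end
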